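/- arXiv:2210.07238 — 2 statements merged into one kernel-verified Lean document; each statement's English description precedes it below -/
import Mathlib

section
/- \sum_{k=0}^\infty binom(2k,k) / ((2k+1) 16^k) * (H_{2k}^{(2)} - (1/4) H_k^{(2)}) = \pi^3 / 648. -/
/-!
Put `θ = arcsin x` and `t m = C(2m, m) / ((2m + 1) 4^m)`, and let `I_k^{(n)}` be the `n`-fold
iterated primitive from `0` of `sin ^ (2k + 1)`. The reduction formula for `∫ sin ^ (2k + 3)`
makes the truncated arcsine series exact with an explicit remainder,
`∑_{m ≤ k} t m sin θ ^ (2m + 1) + (2k + 1)² t k I_k^{(2)}(θ) = θ`,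
and integrating it `n` times replaces `sin ^ (2m + 1)` by `I_m^{(n)}`, the remainder by
`I_k^{(n + 2)}` and `θ` by `θ ^ (n + 1) / (n + 1)!`. For `0 ≤ θ < π / 2` the remainders tend to
`0` since `sin θ < 1`. The case `n = 0` identifies `(2k + 1)² t k I_k^{(2)}(θ)` with the tail
`∑_{m > k} t m x ^ (2m + 1)`; inserting this into the case `n = 2` and exchanging the order of
summation gives `arcsin x ^ 3 / 6 = ∑_m t m x ^ (2m + 1) ∑_{j < m} 1 / (2j + 1)²`. At `x = 1/2`
this is the theorem, because `H_{2k}^{(2)} - H_k^{(2)} / 4` is the sum of `1 / j²` over odd `j < 2k`.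
-/

open Real Filter Finset Topology intervalIntegral
open scoped Nat

noncomputable def iterPrimitive (f : ℝ → ℝ) : ℕ → ℝ → ℝ
  | 0 => f
  | n + 1 => fun θ => ∫ x in (0 : ℝ)..θ, iterPrimitive f n x

section IterPrimitive

variable {f : ℝ → ℝ}

theorem continuous_iterPrimitive (hf : Continuous f) (n : ℕ) :
    Continuous (iterPrimitive f n) := by
  induction n with
  | zero => exact hf
  | succ n ih => exact continuous_primitive (fun _ _ => ih.intervalIntegrable _ _) 0

theorem integral_pow_div_factorial (n : ℕ) (θ : ℝ) :
    ∫ x in (0 : ℝ)..θ, x ^ n / n ! = θ ^ (n + 1) / (n + 1)! := by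
  rw [intervalIntegral.integral_div, integral_pow, Nat.factorial_succ]
  push_cast
  field_simp
  ring

theorem iterPrimitive_const (c : ℝ) (n : ℕ) (θ : ℝ) :
    iterPrimitive (fun _ => c) n θ = c * (θ ^ n / n !) := by
  induction n generalizing θ with
  | zero => simp [iterPrimitive]
  | succ n ih =>
    simp only [iterPrimitive, ih, intervalIntegral.integral_const_mul, integral_pow_div_factorial]

theorem iterPrimitive_mono {g : ℝ → ℝ} (hf : Continuous f) (hg : Continuous g) {θ : ℝ}
    (hθ : 0 ≤ θ) (hfg : ∀ x ∈ Set.Icc 0 θ, f x ≤ g x) (n : ℕ) :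
    iterPrimitive f n θ ≤ iterPrimitive g n θ := by
  induction n generalizing θ with
  | zero => exact hfg θ ⟨hθ, le_rfl⟩
  | succ n ih =>
    refine integral_mono_on hθ ((continuous_iterPrimitive hf n).intervalIntegrable _ _)
      ((continuous_iterPrimitive hg n).intervalIntegrable _ _) fun x hx => ?_
    exact ih hx.1 fun y hy => hfg y ⟨hy.1, hy.2.trans hx.2⟩

end IterPrimitive

noncomputable def arcsinCoeff (k : ℕ) : ℝ := Nat.centralBinom k / ((2 * k + 1) * 4 ^ k)

theorem arcsinCoeff_zero : arcsinCoeff 0 = 1 := by simp [arcsinCoeff]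

theorem arcsinCoeff_nonneg (k : ℕ) : 0 ≤ arcsinCoeff k := by
  unfold arcsinCoeff; positivity

theorem arcsinCoeff_le_one (k : ℕ) : arcsinCoeff k ≤ 1 := by
  have hbinom : (Nat.centralBinom k : ℝ) ≤ 4 ^ k := by
    exact_mod_cast Nat.centralBinom_le_four_pow k
  rw [arcsinCoeff, div_le_one (by positivity)]
  nlinarith [pow_pos (by norm_num : (0 : ℝ) < 4) k, (k.cast_nonneg : (0 : ℝ) ≤ k)]

theorem arcsinCoeff_succ (k : ℕ) :
    (2 * k + 1 : ℝ) ^ 2 * arcsinCoeff k = (2 * k + 2) * (2 * k + 3) * arcsinCoeff (k + 1) := by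
  have hrec :
      ((k : ℝ) + 1) * Nat.centralBinom (k + 1) = 2 * (2 * k + 1) * Nat.centralBinom k := by
    exact_mod_cast Nat.succ_mul_centralBinom_succ k
  simp only [arcsinCoeff, pow_succ]
  push_cast
  field_simp
  linear_combination (-2 * (2 * (k : ℝ) + 3)) * hrec

noncomputable def sinPowIter (k n : ℕ) : ℝ → ℝ := iterPrimitive (fun x => sin x ^ (2 * k + 1)) n

@[fun_prop]
theorem continuous_sinPowIter (k n : ℕ) : Continuous (sinPowIter k n) :=
  continuous_iterPrimitive (by fun_prop) n

theorem sinPowIter_two_succ (k : ℕ) (θ : ℝ) :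
    (2 * k + 3 : ℝ) * sinPowIter (k + 1) 2 θ =
      (2 * k + 2) * sinPowIter k 2 θ - sin θ ^ (2 * k + 3) / (2 * k + 3) := by
  have hone : ∀ y, (2 * k + 3 : ℝ) * sinPowIter (k + 1) 1 y =
      (2 * k + 2) * sinPowIter k 1 y - sin y ^ (2 * k + 2) * cos y := by
    intro y
    simp only [sinPowIter, iterPrimitive, show 2 * (k + 1) + 1 = (2 * k + 1) + 2 by ring,
      integral_sin_pow, sin_zero, cos_zero]
    push_cast
    field_simp
    ring
  have hsincos :
      ∫ y in (0 : ℝ)..θ, sin y ^ (2 * k + 2) * cos y = sin θ ^ (2 * k + 3) / (2 * k + 3) := by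
    have h := integral_sin_pow_mul_cos_pow_odd (a := 0) (b := θ) (2 * k + 2) 0
    norm_num [add_assoc] at h
    exact h
  calc (2 * k + 3 : ℝ) * sinPowIter (k + 1) 2 θ
      = ∫ y in (0 : ℝ)..θ, (2 * k + 3 : ℝ) * sinPowIter (k + 1) 1 y :=
        (intervalIntegral.integral_const_mul _ _).symm
    _ = ∫ y in (0 : ℝ)..θ, ((2 * k + 2) * sinPowIter k 1 y - sin y ^ (2 * k + 2) * cos y) := by
        simp only [hone]
    _ = _ := by
        rw [intervalIntegral.integral_sub (Continuous.intervalIntegrable (by fun_prop) _ _)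
          (Continuous.intervalIntegrable (by fun_prop) _ _),
          intervalIntegral.integral_const_mul, hsincos]
        rfl

theorem sum_arcsinCoeff_mul_sin_pow_add (k : ℕ) (θ : ℝ) :
    ∑ m ∈ range (k + 1), arcsinCoeff m * sin θ ^ (2 * m + 1) +
      (2 * k + 1 : ℝ) ^ 2 * arcsinCoeff k * sinPowIter k 2 θ = θ := by
  induction k with
  | zero =>
    have h : sinPowIter 0 2 θ = θ - sin θ := by
      simp [sinPowIter, iterPrimitive, integral_sin, intervalIntegral.integral_sub]
    simp [arcsinCoeff_zero, h]
  | succ k ih =>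
    rw [sum_range_succ]
    push_cast
    linear_combination (norm := skip) ih - sinPowIter k 2 θ * arcsinCoeff_succ k
      + (2 * (k : ℝ) + 3) * arcsinCoeff (k + 1) * sinPowIter_two_succ k θ
    field_simp
    ring

theorem sum_arcsinCoeff_mul_sinPowIter_add (k n : ℕ) (θ : ℝ) :
    ∑ m ∈ range (k + 1), arcsinCoeff m * sinPowIter m n θ +
      (2 * k + 1 : ℝ) ^ 2 * arcsinCoeff k * sinPowIter k (n + 2) θ = θ ^ (n + 1) / (n + 1)! := by
  induction n generalizing θ with
  | zero => simpa [sinPowIter, iterPrimitive] using sum_arcsinCoeff_mul_sin_pow_add k θ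
  | succ n ih =>
    rw [← integral_pow_div_factorial]
    simp_rw [← ih]
    rw [intervalIntegral.integral_add (Continuous.intervalIntegrable (by fun_prop) _ _)
      (Continuous.intervalIntegrable (by fun_prop) _ _), intervalIntegral.integral_finsetSum
      fun m _ => Continuous.intervalIntegrable (by fun_prop) _ _]
    simp only [intervalIntegral.integral_const_mul]
    rfl

theorem tendsto_odd_sq_mul_pow_odd {r : ℝ} (hr : |r| < 1) :
    Tendsto (fun k : ℕ => (2 * k + 1 : ℝ) ^ 2 * r ^ (2 * k + 1)) atTop (𝓝 0) := by
  have hodd : Tendsto (fun k : ℕ => 2 * k + 1) atTop atTop :=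
    tendsto_atTop_mono (fun k => show k ≤ 2 * k + 1 by omega) tendsto_id
  have h := (tendsto_pow_const_mul_const_pow_of_abs_lt_one 2 hr).comp hodd
  simpa [Function.comp_def] using h

section Bounds

variable {θ : ℝ} (hθ₀ : 0 ≤ θ)
include hθ₀

theorem sinPowIter_nonneg (hθ : θ ≤ π) (k n : ℕ) : 0 ≤ sinPowIter k n θ := by
  have h := iterPrimitive_mono continuous_const (by fun_prop) hθ₀
    (fun x hx => pow_nonneg (sin_nonneg_of_nonneg_of_le_pi hx.1 (hx.2.trans hθ)) (2 * k + 1)) n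
  rwa [iterPrimitive_const, zero_mul] at h

theorem sinPowIter_le (hθ : θ ≤ π / 2) (k n : ℕ) :
    sinPowIter k n θ ≤ sin θ ^ (2 * k + 1) * (θ ^ n / n !) := by
  have hsin : ∀ x ∈ Set.Icc 0 θ, sin x ^ (2 * k + 1) ≤ sin θ ^ (2 * k + 1) := fun x hx =>
    pow_le_pow_left₀ (sin_nonneg_of_nonneg_of_le_pi hx.1 (by linarith [hx.2, pi_pos]))
      (sin_le_sin_of_le_of_le_pi_div_two (by linarith [hx.1, pi_pos]) hθ hx.2) _
  have h := iterPrimitive_mono (by fun_prop) continuous_const hθ₀ hsin n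
  rwa [iterPrimitive_const] at h

theorem tendsto_arcsinCoeff_mul_sinPowIter (hθ : θ < π / 2) (n : ℕ) :
    Tendsto (fun k : ℕ => (2 * k + 1 : ℝ) ^ 2 * arcsinCoeff k * sinPowIter k n θ) atTop (𝓝 0) := by
  have hsin : |sin θ| < 1 := by
    rw [abs_of_nonneg (sin_nonneg_of_nonneg_of_le_pi hθ₀ (by linarith [pi_pos]))]
    calc sin θ < sin (π / 2) := sin_lt_sin_of_lt_of_le_pi_div_two (by linarith [pi_pos]) le_rfl hθ
      _ = 1 := sin_pi_div_two
  have hbound : ∀ k : ℕ, (2 * k + 1 : ℝ) ^ 2 * arcsinCoeff k * sinPowIter k n θ ≤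
      θ ^ n / n ! * ((2 * k + 1 : ℝ) ^ 2 * sin θ ^ (2 * k + 1)) := fun k => by
    have h := sinPowIter_le hθ₀ hθ.le k n
    have := sinPowIter_nonneg hθ₀ (by linarith [pi_pos]) k n
    have := arcsinCoeff_le_one k
    have := arcsinCoeff_nonneg k
    calc _ ≤ (2 * k + 1 : ℝ) ^ 2 * 1 * sinPowIter k n θ := by gcongr
      _ ≤ _ := by nlinarith
  have hlim := (tendsto_odd_sq_mul_pow_odd hsin).const_mul (θ ^ n / n !)
  rw [mul_zero] at hlim
  refine squeeze_zero (fun k => ?_) hbound hlim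
  have := sinPowIter_nonneg hθ₀ (by linarith [pi_pos]) k n
  have := arcsinCoeff_nonneg k
  positivity

theorem hasSum_arcsinCoeff_mul_sinPowIter (hθ : θ < π / 2) (n : ℕ) :
    HasSum (fun m => arcsinCoeff m * sinPowIter m n θ) (θ ^ (n + 1) / (n + 1)!) := by
  have hnonneg : ∀ m, 0 ≤ arcsinCoeff m * sinPowIter m n θ := fun m =>
    mul_nonneg (arcsinCoeff_nonneg m) (sinPowIter_nonneg hθ₀ (by linarith [pi_pos]) m n)
  rw [hasSum_iff_tendsto_nat_of_nonneg hnonneg, ← tendsto_add_atTop_iff_nat 1]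
  have h := (tendsto_arcsinCoeff_mul_sinPowIter hθ₀ hθ (n + 2)).const_sub (θ ^ (n + 1) / (n + 1)!)
  rw [sub_zero] at h
  refine h.congr fun k => ?_
  rw [← sum_arcsinCoeff_mul_sinPowIter_add k n θ]
  ring

end Bounds

theorem hasSum_mul_sum_range_of_hasSum_tail {a b T : ℕ → ℝ} {s : ℝ} (ha : ∀ m, 0 ≤ a m)
    (hb : ∀ k, 0 ≤ b k) (hT : ∀ k, HasSum (fun m => a (m + (k + 1))) (T k))
    (hs : HasSum (fun k => b k * T k) s) :
    HasSum (fun m => a m * ∑ k ∈ range m, b k) s := by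
  set f : ℕ × ℕ → ℝ := fun p => if p.1 < p.2 then b p.1 * a p.2 else 0
  have hf : 0 ≤ f := fun p => by
    simp only [f, Pi.zero_apply]
    split_ifs
    exacts [mul_nonneg (hb _) (ha _), le_rfl]
  have hrow : ∀ k, HasSum (fun m => f (k, m)) (b k * T k) := fun k => by
    rw [← hasSum_nat_add_iff' (k + 1)]
    have hzero : ∑ m ∈ range (k + 1), f (k, m) = 0 :=
      sum_eq_zero fun m hm => if_neg (by simpa using hm)
    have hlt : ∀ m, k < m + (k + 1) := fun m => by omega
    simpa [hzero, f, hlt] using (hT k).mul_left (b k)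
  have hcol : ∀ m, HasSum (fun k => f (k, m)) (a m * ∑ k ∈ range m, b k) := fun m => by
    rw [mul_sum, sum_congr rfl fun k hk => show a m * b k = f (k, m) from
      ((if_pos (mem_range.mp hk)).trans (mul_comm _ _)).symm]
    exact hasSum_sum_of_ne_finset_zero fun k hk => if_neg (by simpa using hk)
  have hsum : HasSum f s := by
    have hsummable : Summable f := (summable_prod_of_nonneg hf).2
      ⟨fun k => (hrow k).summable, by simpa only [(hrow _).tsum_eq] using hs.summable⟩
    rw [← (hsummable.hasSum.prod_fiberwise hrow).unique hs]
    exact hsummable.hasSum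
  exact ((Equiv.prodComm ℕ ℕ).hasSum_iff.2 hsum).prod_fiberwise hcol

theorem hasSum_arcsin_pow_three {x : ℝ} (hx₀ : 0 ≤ x) (hx : x < 1) :
    HasSum (fun k => arcsinCoeff k * x ^ (2 * k + 1) * ∑ j ∈ range k, 1 / (2 * j + 1 : ℝ) ^ 2)
      (arcsin x ^ 3 / 6) := by
  set θ := arcsin x
  have hθ₀ : 0 ≤ θ := arcsin_nonneg.2 hx₀
  have hθ : θ < π / 2 := arcsin_lt_pi_div_two.2 hx
  have hsin : sin θ = x := sin_arcsin (by linarith) hx.le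
  have htail : ∀ k, HasSum (fun m => arcsinCoeff (m + (k + 1)) * sin θ ^ (2 * (m + (k + 1)) + 1))
      ((2 * k + 1 : ℝ) ^ 2 * arcsinCoeff k * sinPowIter k 2 θ) := fun k => by
    have h := (hasSum_nat_add_iff' (k + 1)).2 (hasSum_arcsinCoeff_mul_sinPowIter hθ₀ hθ 0)
    rwa [← sum_arcsinCoeff_mul_sinPowIter_add k 0 θ, add_sub_cancel_left] at h
  have hweighted : HasSum (fun k : ℕ => 1 / (2 * k + 1 : ℝ) ^ 2 *
      ((2 * k + 1 : ℝ) ^ 2 * arcsinCoeff k * sinPowIter k 2 θ)) (θ ^ 3 / 6) := by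
    convert hasSum_arcsinCoeff_mul_sinPowIter hθ₀ hθ 2 using 1
    · ext k
      field_simp
    · norm_num [Nat.factorial]
  rw [hsin] at htail
  exact hasSum_mul_sum_range_of_hasSum_tail (a := fun m => arcsinCoeff m * x ^ (2 * m + 1))
    (fun m => mul_nonneg (arcsinCoeff_nonneg m) (pow_nonneg hx₀ _)) (fun k => by positivity)
    htail hweighted

theorem sum_Icc_inv_sq_two_mul_sub (k : ℕ) :
    ∑ j ∈ Icc 1 (2 * k), 1 / (j : ℝ) ^ 2 - 1 / 4 * ∑ j ∈ Icc 1 k, 1 / (j : ℝ) ^ 2 =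
      ∑ j ∈ range k, 1 / (2 * j + 1 : ℝ) ^ 2 := by
  induction k with
  | zero => simp
  | succ k ih =>
    rw [sum_range_succ, ← ih, show 2 * (k + 1) = 2 * k + 1 + 1 by ring,
      sum_Icc_succ_top (by omega), sum_Icc_succ_top (by omega), sum_Icc_succ_top (by omega)]
    push_cast
    field_simp
    ring

theorem sum_central_binom_harmonic2_16 :
    ∑' k : ℕ,
        (Nat.choose (2 * k) k : ℝ) / ((2 * (k : ℝ) + 1) * 16 ^ k) *
          ((∑ j ∈ Finset.Icc 1 (2 * k), (1 : ℝ) / (j : ℝ) ^ 2) -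
            (1 / 4) * ∑ j ∈ Finset.Icc 1 k, (1 : ℝ) / (j : ℝ) ^ 2) =
      Real.pi ^ 3 / 648 := by
  have harcsin : arcsin (1 / 2) = π / 6 := by
    rw [← sin_pi_div_six, arcsin_sin (by linarith [pi_pos]) (by linarith [pi_pos])]
  have h := (hasSum_arcsin_pow_three (x := 1 / 2) (by norm_num) (by norm_num)).mul_left 2
  rw [harcsin] at h
  convert h.tsum_eq using 1
  · refine tsum_congr fun k => ?_
    rw [sum_Icc_inv_sq_two_mul_sub, arcsinCoeff, Nat.centralBinom_eq_two_mul_choose]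
    have h16 : (16 : ℝ) ^ k = 4 ^ k * 4 ^ k := by rw [← mul_pow]; norm_num
    have h2 : (1 / 2 : ℝ) ^ (2 * k + 1) = 1 / (2 * 4 ^ k) := by
      rw [pow_succ, pow_mul, div_pow, div_pow]; norm_num
    rw [h16, h2]
    field_simp
  · ring
end

section
/- For every real x with -1/4 < x < 1/4, \sum_{k=0}^\infty binom(2k,k) H_{2k} x^k = (1/sqrt(1-4x)) * log((1 + sqrt(1-4x)) / (2(1-4x))). -/
/-!
Write `H_{2k} = ∫₀¹ (1 + t + ⋯ + t^{2k-1}) dt` and exchange sum and integral, which dominated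
convergence allows for `|x| < 1/4`. The binomial series
`∑ binom(2k,k) y^k = (1 - 4y)^{-1/2}` turns the integrand into
`(1/√(1-4x) - 1/√(1-4xt²)) / (1 - t)`, which has the elementary antiderivative
`-log (1 - 4xt + √(1-4x) √(1-4xt²)) / √(1-4x)`.
-/

open Finset

theorem Ring.multichoose_succ_mul {R : Type*} [Field R] [CharZero R] (r : R) (n : ℕ) :
    Ring.multichoose r (n + 1) * (n + 1) = Ring.multichoose r n * (r + n) := by
  have h (m : ℕ) : Ring.multichoose r m = (ascPochhammer R m).eval r / m.factorial := by
    rw [eq_div_iff (Nat.cast_ne_zero.mpr m.factorial_ne_zero), mul_comm, ← nsmul_eq_mul,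
      Ring.factorial_nsmul_multichoose_eq_ascPochhammer, Polynomial.ascPochhammer_smeval_eq_eval]
  rw [h, h, ascPochhammer_succ_eval, Nat.factorial_succ]
  push_cast
  field_simp

theorem Ring.multichoose_one_half_mul_four_pow (n : ℕ) :
    Ring.multichoose (1 / 2 : ℝ) n * 4 ^ n = n.centralBinom := by
  induction n with
  | zero => simp
  | succ n ih =>
    have hc : ((n + 1 : ℕ) : ℝ) * (n + 1).centralBinom = 2 * (2 * n + 1) * n.centralBinom := by
      exact_mod_cast Nat.succ_mul_centralBinom_succ n
    have hm := Ring.multichoose_succ_mul (1 / 2 : ℝ) n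
    rw [← ih] at hc
    push_cast at hc
    apply mul_left_cancel₀ (show (n + 1 : ℝ) ≠ 0 by positivity)
    rw [hc]
    linear_combination 4 * 4 ^ n * hm

theorem hasSum_centralBinom_mul_pow {y : ℝ} (hy : |y| < 1 / 4) :
    HasSum (fun k ↦ (k.centralBinom : ℝ) * y ^ k) (1 / √(1 - 4 * y)) := by
  have h4y : 4 * y ∈ Metric.eball (0 : ℝ) 1 := by
    rw [Metric.mem_eball, edist_zero_right, ← ofReal_norm, ENNReal.ofReal_lt_one,
      Real.norm_eq_abs, abs_lt]
    constructor <;> linarith [abs_lt.1 hy]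
  have hcoeff (k : ℕ) :
      Ring.multichoose (1 / 2 : ℝ) k * (4 * y) ^ k = k.centralBinom * y ^ k := by
    rw [← Ring.multichoose_one_half_mul_four_pow, mul_pow]; ring
  simpa only [FormalMultilinearSeries.ofScalars_apply_eq, ← Ring.multichoose_eq, smul_eq_mul,
    zero_add, ← Real.sqrt_eq_rpow, hcoeff] using
    (Real.one_div_one_sub_rpow_hasFPowerSeriesOnBall_zero (1 / 2)).hasSum h4y

theorem integral_geom_sum (n : ℕ) :
    ∫ t in (0 : ℝ)..1, ∑ j ∈ range n, t ^ j = ∑ j ∈ Icc 1 n, (1 : ℝ) / j := by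
  rw [intervalIntegral.integral_finsetSum fun j _ ↦ (continuous_pow j).intervalIntegrable 0 1,
    ← Ico_add_one_right_eq_Icc, sum_Ico_eq_sum_range, Nat.add_sub_cancel]
  refine sum_congr rfl fun j _ ↦ ?_
  rw [integral_pow]
  push_cast
  ring

theorem hasSum_centralBinom_mul_pow_mul_geom_sum {x t : ℝ} (hx : |x| < 1 / 4) (ht : |t| ≤ 1)
    (ht1 : t ≠ 1) :
    HasSum (fun k ↦ (k.centralBinom : ℝ) * x ^ k * ∑ j ∈ range (2 * k), t ^ j)
      ((1 / √(1 - 4 * x) - 1 / √(1 - 4 * x * t ^ 2)) / (1 - t)) := by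
  have hxt : |x * t ^ 2| < 1 / 4 := by
    rw [abs_mul, abs_pow]
    nlinarith [abs_nonneg x, pow_le_one₀ (n := 2) (abs_nonneg t) ht]
  have hB := hasSum_centralBinom_mul_pow hxt
  rw [← mul_assoc] at hB
  refine ((hasSum_centralBinom_mul_pow hx).sub hB |>.div_const (1 - t)).congr_fun fun k ↦ ?_
  have : t - 1 ≠ 0 := sub_ne_zero.2 ht1
  have : 1 - t ≠ 0 := sub_ne_zero.2 ht1.symm
  rw [geom_sum_eq ht1, mul_pow, ← pow_mul]
  field_simp
  ring

namespace Chen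

lemma one_sub_four_mul_pos {x t : ℝ} (hx : x < 1 / 4) (ht : t ∈ Set.Icc (0 : ℝ) 1) :
    0 < 1 - 4 * x * t := by
  obtain ⟨ht0, ht1⟩ := ht
  rcases le_or_gt 0 x with h | h <;> nlinarith

lemma one_sub_four_mul_sq_pos {x t : ℝ} (hx : x < 1 / 4) (ht : t ∈ Set.Icc (0 : ℝ) 1) :
    0 < 1 - 4 * x * t ^ 2 :=
  one_sub_four_mul_pos hx ⟨sq_nonneg t, pow_le_one₀ ht.1 ht.2⟩

noncomputable def denom (x t : ℝ) : ℝ :=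
  1 - 4 * x * t + √(1 - 4 * x) * √(1 - 4 * x * t ^ 2)

-- `(1/√(1-4x) - 1/√(1-4xt²)) / (1 - t)` with the removable singularity at `t = 1` cleared
noncomputable def integrand (x t : ℝ) : ℝ :=
  4 * x * (√(1 - 4 * x * t ^ 2) + √(1 - 4 * x) * t) /
    (√(1 - 4 * x) * √(1 - 4 * x * t ^ 2) * denom x t)

lemma denom_pos {x t : ℝ} (hx : x < 1 / 4) (ht : t ∈ Set.Icc (0 : ℝ) 1) : 0 < denom x t := by
  have := one_sub_four_mul_pos hx ht
  unfold denom
  positivity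

lemma inv_sqrt_sub_inv_sqrt_div_eq_integrand {x t : ℝ} (hx : x < 1 / 4)
    (ht : t ∈ Set.Ico (0 : ℝ) 1) :
    (1 / √(1 - 4 * x) - 1 / √(1 - 4 * x * t ^ 2)) / (1 - t) = integrand x t := by
  have ht' : t ∈ Set.Icc (0 : ℝ) 1 := Set.Ico_subset_Icc_self ht
  have h1 : 0 < 1 - 4 * x := by linarith
  have hN := denom_pos hx ht'
  have ht1 : 1 - t ≠ 0 := by linarith [ht.2]
  unfold integrand
  set s := √(1 - 4 * x)
  set R := √(1 - 4 * x * t ^ 2)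
  have hs0 : 0 < s := Real.sqrt_pos.2 h1
  have hR0 : 0 < R := Real.sqrt_pos.2 (one_sub_four_mul_sq_pos hx ht')
  have key : (R - s) * denom x t = 4 * x * (1 - t) * (R + s * t) := by
    unfold denom
    linear_combination s * Real.sq_sqrt (one_sub_four_mul_sq_pos hx ht').le -
      R * Real.sq_sqrt h1.le
  rw [div_eq_div_iff ht1 (by positivity)]
  field_simp
  linear_combination key

lemma hasDerivAt_log_denom {x t : ℝ} (hx : x < 1 / 4) (ht : t ∈ Set.Icc (0 : ℝ) 1) :
    HasDerivAt (fun t ↦ -(1 / √(1 - 4 * x)) * Real.log (denom x t)) (integrand x t) t := by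
  have hu := one_sub_four_mul_sq_pos hx ht
  have hs0 := Real.sqrt_pos.2 (show 0 < 1 - 4 * x by linarith)
  have hR0 := Real.sqrt_pos.2 hu
  have hN := denom_pos hx ht
  have hR : HasDerivAt (fun t ↦ √(1 - 4 * x * t ^ 2))
      (-(8 * x * t) / (2 * √(1 - 4 * x * t ^ 2))) t := by
    refine HasDerivAt.sqrt ?_ hu.ne'
    exact (((hasDerivAt_pow 2 t).const_mul (4 * x)).const_sub 1).congr_deriv (by ring)
  have hD : HasDerivAt (denom x)
      (-(4 * x) + √(1 - 4 * x) * (-(8 * x * t) / (2 * √(1 - 4 * x * t ^ 2)))) t :=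
    ((((hasDerivAt_id t).const_mul (4 * x)).const_sub 1).add
      (hR.const_mul √(1 - 4 * x))).congr_deriv (by ring)
  refine ((hD.log hN.ne').const_mul (-(1 / √(1 - 4 * x)))).congr_deriv ?_
  unfold integrand
  field_simp
  ring

lemma continuousOn_integrand {x : ℝ} (hx : x < 1 / 4) :
    ContinuousOn (integrand x) (Set.Icc 0 1) := by
  have hR : ContinuousOn (fun t : ℝ ↦ √(1 - 4 * x * t ^ 2)) (Set.Icc 0 1) := by fun_prop
  have hD : ContinuousOn (denom x) (Set.Icc 0 1) := by unfold denom; fun_prop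
  refine ContinuousOn.div (by fun_prop) (by fun_prop) fun t ht ↦ ?_
  have := denom_pos hx ht
  have := one_sub_four_mul_sq_pos hx ht
  have := Real.sqrt_pos.2 (show 0 < 1 - 4 * x by linarith)
  positivity

lemma integral_integrand {x : ℝ} (hx : x < 1 / 4) :
    ∫ t in (0 : ℝ)..1, integrand x t =
      1 / √(1 - 4 * x) * Real.log ((1 + √(1 - 4 * x)) / (2 * (1 - 4 * x))) := by
  have h1 : 0 < 1 - 4 * x := by linarith
  rw [intervalIntegral.integral_eq_sub_of_hasDerivAt
    (fun t ht ↦ hasDerivAt_log_denom hx (Set.uIcc_of_le (zero_le_one' ℝ) ▸ ht))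
    ((continuousOn_integrand hx).intervalIntegrable_of_Icc zero_le_one)]
  have hD1 : denom x 1 = 2 * (1 - 4 * x) := by
    simp only [denom, one_pow, mul_one, ← sq, Real.sq_sqrt h1.le]; ring
  have hD0 : denom x 0 = 1 + √(1 - 4 * x) := by simp [denom]
  rw [hD1, hD0, Real.log_div (by positivity) (by positivity)]
  ring

theorem hasSum_integral_centralBinom_mul_geom_sum {x : ℝ} (hx : |x| < 1 / 4) :
    HasSum
      (fun k ↦ ∫ t in (0 : ℝ)..1,
        (k.centralBinom : ℝ) * x ^ k * ∑ j ∈ range (2 * k), t ^ j)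
      (∫ t in (0 : ℝ)..1, integrand x t) := by
  have h4x : ‖4 * |x|‖ < 1 := by rw [Real.norm_of_nonneg (by positivity)]; linarith
  refine intervalIntegral.hasSum_integral_of_dominated_convergence
    (fun k _ ↦ 2 * (k ^ 1 * (4 * |x|) ^ k)) (fun k ↦ by fun_prop) (fun k ↦ ?_) ?_ ?_ ?_
  · refine .of_forall fun t ht ↦ ?_
    rw [Set.uIoc_of_le zero_le_one] at ht
    have hgeom : ‖∑ j ∈ range (2 * k), t ^ j‖ ≤ 2 * k := by
      rw [Real.norm_of_nonneg (sum_nonneg fun j _ ↦ pow_nonneg ht.1.le j)]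
      calc ∑ j ∈ range (2 * k), t ^ j ≤ ∑ j ∈ range (2 * k), (1 : ℝ) :=
            sum_le_sum fun j _ ↦ pow_le_one₀ ht.1.le ht.2
        _ = 2 * k := by simp
    have hbinom : (k.centralBinom : ℝ) ≤ 4 ^ k := by exact_mod_cast k.centralBinom_le_four_pow
    calc ‖(k.centralBinom : ℝ) * x ^ k * ∑ j ∈ range (2 * k), t ^ j‖
        = k.centralBinom * |x| ^ k * ‖∑ j ∈ range (2 * k), t ^ j‖ := by
          rw [norm_mul, norm_mul, norm_pow, Real.norm_natCast, Real.norm_eq_abs]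
      _ ≤ 4 ^ k * |x| ^ k * (2 * k) := by gcongr
      _ = 2 * (k ^ 1 * (4 * |x|) ^ k) := by ring
  · exact .of_forall fun _ _ ↦ (summable_pow_mul_geometric_of_norm_lt_one 1 h4x).mul_left 2
  · exact intervalIntegrable_const
  · -- the geometric sum formula needs `t ≠ 1`
    filter_upwards [(Set.countable_singleton (1 : ℝ)).ae_notMem MeasureTheory.volume]
      with t ht1 ht
    rw [Set.uIoc_of_le zero_le_one] at ht
    have ht' : t ∈ Set.Ico (0 : ℝ) 1 := ⟨ht.1.le, lt_of_le_of_ne ht.2 ht1⟩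
    rw [← inv_sqrt_sub_inv_sqrt_div_eq_integrand (abs_lt.1 hx).2 ht']
    exact hasSum_centralBinom_mul_pow_mul_geom_sum hx (abs_le.2 ⟨by linarith [ht.1], ht.2⟩) ht1

end Chen

theorem chen (x : ℝ) (hx1 : -(1/4) < x) (hx2 : x < 1/4) :
    ∑' k : ℕ,
        (Nat.choose (2 * k) k : ℝ) * (∑ j ∈ Finset.Icc 1 (2 * k), (1 : ℝ) / (j : ℝ)) * x ^ k =
      1 / Real.sqrt (1 - 4 * x) *
        Real.log ((1 + Real.sqrt (1 - 4 * x)) / (2 * (1 - 4 * x))) := by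
  rw [← Chen.integral_integrand hx2,
    ← (Chen.hasSum_integral_centralBinom_mul_geom_sum (abs_lt.2 ⟨hx1, hx2⟩)).tsum_eq]
  refine tsum_congr fun k ↦ ?_
  rw [intervalIntegral.integral_const_mul, integral_geom_sum, Nat.centralBinom_eq_two_mul_choose]
  ring
end
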